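/- Let n ∈ ℕ, let s ≥ 1 be an integer, and let a, b, M, Λ₀ be reals with 0 < a < Λ₀, b ≥ 0 and M > 0. Then ∫_a^{Λ₀} (log₊ max(b, λ/M))ⁿ λ^{−1−s} dλ ≤ a^{−s} · Σ_{j=0}^{n} (3·n!/j!) · (log₊ max(b, a/M))^j. -/

import Mathlib

open MeasureTheory Real

/-- `log₊(x) = log(max(1,x))`. -/
noncomputable def logPlus (x : ℝ) : ℝ := Real.log (max 1 x)

/-!
For `t ≥ a` we have `max b (t / M) ≤ max b (a / M) · (t / a)`, so by subadditivity of `log⁺`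
the integrand is at most `(L + log (t / a)) ^ n · t ^ (-1 - s)` with `L = log₊ max(b, a/M)`.
Expanding binomially and substituting `t = a eᵘ`, each term becomes a Gamma integral:
`∫ₐ^∞ log (t / a) ^ k · t ^ (-1 - s) dt = a ^ (-s) · k! / s ^ (k + 1) ≤ a ^ (-s) · k!`,
and `C(n, j) · (n - j)! = n! / j!`. The factor `3` is slack.
-/

open Set Finset
open scoped Nat

lemma logPlus_eq_posLog {x : ℝ} (hx : 0 ≤ x) : logPlus x = log⁺ x :=
  (posLog_eq_log_max_one hx).symm

lemma logPlus_nonneg (x : ℝ) : 0 ≤ logPlus x :=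
  log_nonneg (le_max_left _ _)

lemma logPlus_max_div_le (b : ℝ) {a t M : ℝ} (ha : 0 < a) (hat : a ≤ t) (hM : 0 < M) :
    logPlus (max b (t / M)) ≤ logPlus (max b (a / M)) + log (t / a) := by
  have hpos : 0 < max b (a / M) := lt_max_of_lt_right (div_pos ha hM)
  have hta : 1 ≤ t / a := (one_le_div ha).mpr hat
  have ht : 0 < t := ha.trans_le hat
  have hle : max b (t / M) ≤ max b (a / M) * (t / a) := by
    refine max_le ?_ ?_
    · exact (le_max_left _ _).trans (le_mul_of_one_le_right hpos.le hta)
    · rw [show t / M = a / M * (t / a) by field_simp]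
      exact mul_le_mul_of_nonneg_right (le_max_right _ _) (by positivity)
  calc logPlus (max b (t / M))
      = log⁺ (max b (t / M)) := logPlus_eq_posLog (le_max_of_le_right (by positivity))
    _ ≤ log⁺ (max b (a / M) * (t / a)) :=
      posLog_le_posLog (le_max_of_le_right (by positivity)) hle
    _ ≤ log⁺ (max b (a / M)) + log⁺ (t / a) := posLog_mul
    _ = logPlus (max b (a / M)) + log (t / a) := by
      rw [logPlus_eq_posLog hpos.le,
        posLog_eq_log (x := t / a) (by rwa [abs_of_pos (by positivity)])]

lemma Nat.cast_choose_mul_factorial_sub {K : Type*} [Field K] [CharZero K] {n j : ℕ}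
    (hj : j ≤ n) : (n.choose j : K) * (n - j)! = n ! / j ! := by
  rw [Nat.cast_choose K hj, div_mul_eq_mul_div,
    mul_div_mul_right _ _ (Nat.cast_ne_zero.mpr (Nat.factorial_ne_zero _))]

section LogIntegral

variable {a S : ℝ}

lemma image_mul_exp_Ioi_zero (ha : 0 < a) : (fun u => a * exp u) '' Ioi 0 = Ioi a := by
  rw [← image_image (a * ·) exp, image_exp_Ioi, exp_zero, image_mul_left_Ioi ha, mul_one]

lemma abs_mul_exp_smul_log_div_pow_mul_rpow (ha : 0 < a) (k : ℕ) (u : ℝ) :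
    |a * exp u| • (log (a * exp u / a) ^ k * (a * exp u) ^ (-1 - S))
      = a ^ (-S) * (u ^ (k : ℝ) * exp (-S * u ^ (1 : ℝ))) := by
  have hpow : a ^ (-S) = a * a ^ (-1 - S) := by
    rw [show -S = 1 + (-1 - S) by ring, rpow_add ha, rpow_one]
  have hexp : exp (-S * u) = exp u * exp (u * (-1 - S)) := by
    rw [← exp_add]; ring_nf
  rw [smul_eq_mul, mul_div_cancel_left₀ _ ha.ne', log_exp, abs_of_pos (by positivity),
    mul_rpow ha.le (exp_pos u).le, ← exp_mul, rpow_natCast, rpow_one, hpow, hexp]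
  ring

variable (k : ℕ)

lemma integrableOn_log_div_pow_mul_rpow_Ioi (ha : 0 < a) (hS : 0 < S) :
    IntegrableOn (fun t => log (t / a) ^ k * t ^ (-1 - S)) (Ioi a) := by
  rw [← image_mul_exp_Ioi_zero ha, integrableOn_image_iff_integrableOn_abs_deriv_smul
    measurableSet_Ioi (fun u _ => ((hasDerivAt_exp u).const_mul a).hasDerivWithinAt)
    (fun u _ v _ h => exp_injective (mul_left_cancel₀ ha.ne' h))]
  simp_rw [abs_mul_exp_smul_log_div_pow_mul_rpow ha]
  exact (integrableOn_rpow_mul_exp_neg_mul_rpow (by linarith [(k.cast_nonneg : (0:ℝ) ≤ k)])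
    one_pos hS).const_mul _

lemma integral_log_div_pow_mul_rpow_Ioi (ha : 0 < a) (hS : 0 < S) :
    ∫ t in Ioi a, log (t / a) ^ k * t ^ (-1 - S) = a ^ (-S) * (k ! / S ^ (k + 1)) := by
  rw [← image_mul_exp_Ioi_zero ha, integral_image_eq_integral_abs_deriv_smul
    measurableSet_Ioi (fun u _ => ((hasDerivAt_exp u).const_mul a).hasDerivWithinAt)
    (fun u _ v _ h => exp_injective (mul_left_cancel₀ ha.ne' h))]
  simp_rw [abs_mul_exp_smul_log_div_pow_mul_rpow ha, integral_const_mul]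
  have := integral_rpow_mul_exp_neg_mul_Ioi (show (0:ℝ) < k + 1 by positivity) hS
  simp only [add_sub_cancel_right, Gamma_nat_eq_factorial, rpow_one, neg_mul] at this ⊢
  rw [this, one_div, inv_rpow hS.le, ← Nat.cast_add_one, rpow_natCast, div_eq_inv_mul]

end LogIntegral

section BinomialIntegral

variable {a S : ℝ} (L : ℝ) (n : ℕ)

lemma add_log_div_pow_mul_rpow_eq_sum (t : ℝ) :
    (L + log (t / a)) ^ n * t ^ (-1 - S)
      = ∑ j ∈ range (n + 1), L ^ j * n.choose j * (log (t / a) ^ (n - j) * t ^ (-1 - S)) := by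
  rw [add_pow, sum_mul]
  exact sum_congr rfl fun j _ => by ring

lemma integrableOn_add_log_div_pow_mul_rpow_Ioi (ha : 0 < a) (hS : 0 < S) :
    IntegrableOn (fun t => (L + log (t / a)) ^ n * t ^ (-1 - S)) (Ioi a) := by
  simp_rw [add_log_div_pow_mul_rpow_eq_sum]
  exact integrable_finsetSum _ fun j _ =>
    (integrableOn_log_div_pow_mul_rpow_Ioi (n - j) ha hS).const_mul _

lemma integral_add_log_div_pow_mul_rpow_Ioi (ha : 0 < a) (hS : 0 < S) :
    ∫ t in Ioi a, (L + log (t / a)) ^ n * t ^ (-1 - S)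
      = a ^ (-S) * ∑ j ∈ range (n + 1), n ! / j ! / S ^ (n - j + 1) * L ^ j := by
  simp_rw [add_log_div_pow_mul_rpow_eq_sum]
  rw [integral_finsetSum _ fun j _ =>
    (integrableOn_log_div_pow_mul_rpow_Ioi (n - j) ha hS).const_mul _, mul_sum]
  refine sum_congr rfl fun j hj => ?_
  rw [integral_const_mul, integral_log_div_pow_mul_rpow_Ioi _ ha hS,
    ← Nat.cast_choose_mul_factorial_sub (Nat.lt_succ_iff.mp (mem_range.mp hj))]
  ring

lemma integral_add_log_div_pow_mul_rpow_Ioi_le (hL : 0 ≤ L) (ha : 0 < a) (hS : 1 ≤ S) :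
    ∫ t in Ioi a, (L + log (t / a)) ^ n * t ^ (-1 - S)
      ≤ a ^ (-S) * ∑ j ∈ range (n + 1), n ! / j ! * L ^ j := by
  rw [integral_add_log_div_pow_mul_rpow_Ioi L n ha (by linarith)]
  refine mul_le_mul_of_nonneg_left (sum_le_sum fun j _ => ?_) (by positivity)
  exact mul_le_mul_of_nonneg_right (div_le_self (by positivity) (one_le_pow₀ hS)) (by positivity)

end BinomialIntegral

theorem stmt1_general (n s : ℕ) (hs : 1 ≤ s) (a b M Λ₀ : ℝ)
    (ha : 0 < a) (hM : 0 < M) :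
    (∫ t in Set.Ioo a Λ₀, logPlus (max b (t / M)) ^ n * t ^ (-1 - (s : ℝ)))
      ≤ a ^ (-(s : ℝ)) *
        ∑ j ∈ Finset.range (n + 1),
          (3 * (Nat.factorial n : ℝ) / (Nat.factorial j : ℝ)) *
            logPlus (max b (a / M)) ^ j := by
  set L := logPlus (max b (a / M))
  have hL : 0 ≤ L := logPlus_nonneg _
  have hS : (1 : ℝ) ≤ s := by exact_mod_cast hs
  set G : ℝ → ℝ := fun t => (L + log (t / a)) ^ n * t ^ (-1 - (s : ℝ))
  have hG : IntegrableOn G (Ioi a) :=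
    integrableOn_add_log_div_pow_mul_rpow_Ioi L n ha (by linarith)
  have hG_nonneg : ∀ t ∈ Ioi a, 0 ≤ G t := fun t hat => by
    have hlog : 0 ≤ log (t / a) := log_nonneg ((one_le_div ha).mpr hat.le)
    have ht : 0 < t := ha.trans hat
    positivity
  calc _ ≤ ∫ t in Ioo a Λ₀, G t := by
        refine integral_mono_of_nonneg ?_ (hG.mono_set Ioo_subset_Ioi_self) ?_
        all_goals filter_upwards [ae_restrict_mem measurableSet_Ioo] with t ht
        · have hlog : 0 ≤ logPlus (max b (t / M)) := logPlus_nonneg _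
          have ht₀ : 0 < t := ha.trans ht.1
          positivity
        · have ht₀ : 0 < t := ha.trans ht.1
          exact mul_le_mul_of_nonneg_right
            (pow_le_pow_left₀ (logPlus_nonneg _) (logPlus_max_div_le b ha ht.1.le hM) n)
            (by positivity)
    _ ≤ ∫ t in Ioi a, G t :=
        setIntegral_mono_set hG (ae_restrict_of_forall_mem measurableSet_Ioi hG_nonneg)
          Ioo_subset_Ioi_self.eventuallyLE
    _ ≤ a ^ (-(s : ℝ)) * ∑ j ∈ range (n + 1), n ! / j ! * L ^ j :=
        integral_add_log_div_pow_mul_rpow_Ioi_le L n hL ha hS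
    _ ≤ _ := by
        gcongr with j
        exact le_mul_of_one_le_left (by positivity) (by norm_num)

theorem stmt1 (n s : ℕ) (hs : 1 ≤ s) (a b M Λ₀ : ℝ)
    (ha : 0 < a) (haΛ : a < Λ₀) (hb : 0 ≤ b) (hM : 0 < M) :
    (∫ t in Set.Ioo a Λ₀, logPlus (max b (t / M)) ^ n * t ^ (-1 - (s : ℝ)))
      ≤ a ^ (-(s : ℝ)) *
        ∑ j ∈ Finset.range (n + 1),
          (3 * (Nat.factorial n : ℝ) / (Nat.factorial j : ℝ)) *
            logPlus (max b (a / M)) ^ j :=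
  stmt1_general n s hs a b M Λ₀ ha hM
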